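/- Let c ≥ 1, let A be an invertible c×c real matrix, and let M be an antisymmetric c×c real matrix. Define Λ = Aℤ^c and Λ* = (Aᵀ)^{−1}ℤ^c (the dual lattice). Then the lattice L = { (u + Mv + v, u + Mv − v)/√2 : u ∈ Λ, v ∈ Λ* } ⊂ ℝ^{2c} is even and self-dual with respect to the bilinear form [(x,y),(x',y')] = ⟨x,x'⟩ − ⟨y,y'⟩ of signature (c,c); i.e., [w,w] ∈ 2ℤ for all w ∈ L, and L equals its dual lattice with respect to [·,·]. -/

import Mathlib

/-!
Write `φ(u, v)` for the point of `L` with coordinates `u ∈ Λ`, `v ∈ Λ*`. Since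
`⟨x, M y⟩ = -⟨M x, y⟩`, the `M`-terms cancel and
`[φ(u, v), φ(u', v')] = ⟨v, u'⟩ + ⟨u, v'⟩`; as `Λ` and `Λ*` pair integrally, `L` is even and
contained in its dual. Conversely every `w` equals `φ(a, b)` for some real `a`, `b`, and
`[w, φ(u', 0)] = ⟨b, u'⟩`, `[w, φ(0, v')] = ⟨a, v'⟩`; so if `w` pairs integrally with `L`,
then `b ∈ Λ*` and `a ∈ Λ** = Λ`.
-/

open Matrix

section Lattice

variable {n : Type*} [Fintype n]

def intLattice (P : Matrix n n ℝ) : Set (n → ℝ) :=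
  {u | ∃ z : n → ℤ, u = P *ᵥ fun i => (z i : ℝ)}

lemma zero_mem_intLattice (P : Matrix n n ℝ) : 0 ∈ intLattice P :=
  ⟨0, by ext; simp [mulVec, dotProduct]⟩

variable [DecidableEq n]

lemma exists_int_dotProduct_eq_of_mem_intLattice {P : Matrix n n ℝ} (hP : IsUnit P.det)
    {u v : n → ℝ} (hu : u ∈ intLattice P) (hv : v ∈ intLattice (Pᵀ)⁻¹) :
    ∃ k : ℤ, u ⬝ᵥ v = k := by
  obtain ⟨z, rfl⟩ := hu
  obtain ⟨z', rfl⟩ := hv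
  refine ⟨z' ⬝ᵥ z, ?_⟩
  rw [dotProduct_comm, dotProduct_mulVec, ← mulVec_transpose, mulVec_mulVec,
    mul_nonsing_inv _ (by rwa [det_transpose]), one_mulVec]
  simp [dotProduct]

lemma mem_intLattice_inv_transpose {P : Matrix n n ℝ} (hP : IsUnit P.det) {x : n → ℝ}
    (hx : ∀ u ∈ intLattice P, ∃ k : ℤ, x ⬝ᵥ u = k) : x ∈ intLattice (Pᵀ)⁻¹ := by
  have hcoord : ∀ j, ∃ k : ℤ, (Pᵀ *ᵥ x) j = k := fun j => by
    obtain ⟨k, hk⟩ := hx _ ⟨Pi.single j 1, rfl⟩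
    refine ⟨k, ?_⟩
    have hsingle : (fun i => ((Pi.single j 1 : n → ℤ) i : ℝ)) = Pi.single j 1 := by
      ext i; simp [Pi.single_apply]
    rw [← hk, hsingle, mulVec_single_one, dotProduct_comm]
    rfl
  choose z hz using hcoord
  refine ⟨z, ?_⟩
  rw [← funext hz, mulVec_mulVec, nonsing_inv_mul _ (by rwa [det_transpose]), one_mulVec]

theorem intLattice_inv_transpose_eq_dual {P : Matrix n n ℝ} (hP : IsUnit P.det) :
    intLattice (Pᵀ)⁻¹ = {x | ∀ u ∈ intLattice P, ∃ k : ℤ, x ⬝ᵥ u = k} := by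
  ext x
  refine ⟨fun hx u hu => ?_, mem_intLattice_inv_transpose hP⟩
  rw [dotProduct_comm]
  exact exists_int_dotProduct_eq_of_mem_intLattice hP hu hx

theorem intLattice_eq_dual_intLattice_inv_transpose {P : Matrix n n ℝ} (hP : IsUnit P.det) :
    intLattice P = {x | ∀ v ∈ intLattice (Pᵀ)⁻¹, ∃ k : ℤ, x ⬝ᵥ v = k} := by
  have hQ : IsUnit (Pᵀ)⁻¹.det := by
    rw [det_nonsing_inv, det_transpose]
    exact hP.ringInverse
  have hdual := intLattice_inv_transpose_eq_dual hQ
  rwa [transpose_nonsing_inv, transpose_transpose, nonsing_inv_nonsing_inv _ hP] at hdual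

end Lattice

lemma dotProduct_mulVec_of_transpose_eq_neg {n R : Type*} [Fintype n] [CommRing R]
    {M : Matrix n n R} (hM : Mᵀ = -M) (x y : n → R) :
    x ⬝ᵥ M *ᵥ y = -(M *ᵥ x ⬝ᵥ y) := by
  rw [dotProduct_mulVec, ← mulVec_transpose, hM, neg_mulVec, neg_dotProduct]

noncomputable section Narain

variable {n : Type*} [Fintype n] (M : Matrix n n ℝ)

def splitForm (w w' : (n → ℝ) × (n → ℝ)) : ℝ := w.1 ⬝ᵥ w'.1 - w.2 ⬝ᵥ w'.2

def narainPoint (u v : n → ℝ) : (n → ℝ) × (n → ℝ) :=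
  (fun i => (u i + (M *ᵥ v) i + v i) / √2, fun i => (u i + (M *ᵥ v) i - v i) / √2)

/-- The inverse of `narainPoint M`. -/
def narainCoords (w : (n → ℝ) × (n → ℝ)) : (n → ℝ) × (n → ℝ) :=
  let p : n → ℝ := fun i => (w.1 i - w.2 i) / √2
  ((fun i => (w.1 i + w.2 i) / √2) - M *ᵥ p, p)

lemma narainCoords_fst (w : (n → ℝ) × (n → ℝ)) :
    (narainCoords M w).1 = (fun i => (w.1 i + w.2 i) / √2) - M *ᵥ (narainCoords M w).2 :=
  rfl

lemma narainPoint_narainCoords (w : (n → ℝ) × (n → ℝ)) :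
    narainPoint M (narainCoords M w).1 (narainCoords M w).2 = w := by
  ext i <;> simp only [narainPoint, narainCoords, Pi.sub_apply, sub_add_cancel] <;>
    field_simp <;> rw [Real.sq_sqrt zero_le_two] <;> ring

lemma splitForm_narainPoint (hM : Mᵀ = -M) (w : (n → ℝ) × (n → ℝ)) (u v : n → ℝ) :
    splitForm w (narainPoint M u v) =
      (narainCoords M w).2 ⬝ᵥ u + (narainCoords M w).1 ⬝ᵥ v := by
  set p := (narainCoords M w).2
  set q : n → ℝ := fun i => (w.1 i + w.2 i) / √2
  have hpointwise : ∀ i, w.1 i * ((u i + (M *ᵥ v) i + v i) / √2)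
      - w.2 i * ((u i + (M *ᵥ v) i - v i) / √2) = p i * (u + M *ᵥ v) i + q i * v i := by
    intro i
    simp only [p, q, narainCoords, Pi.add_apply]
    field_simp
    ring
  have hsum : splitForm w (narainPoint M u v) = p ⬝ᵥ (u + M *ᵥ v) + q ⬝ᵥ v := by
    simp only [splitForm, narainPoint, dotProduct, ← Finset.sum_sub_distrib, hpointwise,
      Finset.sum_add_distrib]
  rw [hsum, narainCoords_fst, dotProduct_add,
    dotProduct_mulVec_of_transpose_eq_neg hM, sub_dotProduct]
  ring

lemma narainCoords_narainPoint (u v : n → ℝ) : narainCoords M (narainPoint M u v) = (u, v) := by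
  have hp : (narainCoords M (narainPoint M u v)).2 = v := by
    ext i
    simp only [narainCoords, narainPoint]
    field_simp
    rw [Real.sq_sqrt zero_le_two]
    ring
  refine Prod.ext ?_ hp
  rw [narainCoords_fst, hp]
  ext i
  simp only [narainPoint, Pi.sub_apply]
  field_simp
  rw [Real.sq_sqrt zero_le_two]
  ring

lemma splitForm_narainPoint_narainPoint (hM : Mᵀ = -M) (u v u' v' : n → ℝ) :
    splitForm (narainPoint M u v) (narainPoint M u' v') = v ⬝ᵥ u' + u ⬝ᵥ v' := by
  rw [splitForm_narainPoint M hM, narainCoords_narainPoint]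

variable [DecidableEq n] (A : Matrix n n ℝ)

def narainLattice : Set ((n → ℝ) × (n → ℝ)) :=
  {w | ∃ u ∈ intLattice A, ∃ v ∈ intLattice (Aᵀ)⁻¹, w = narainPoint M u v}

variable {M A}

theorem narainLattice_even (hA : IsUnit A.det) (hM : Mᵀ = -M) {w : (n → ℝ) × (n → ℝ)}
    (hw : w ∈ narainLattice M A) : ∃ k : ℤ, splitForm w w = 2 * k := by
  obtain ⟨u, hu, v, hv, rfl⟩ := hw
  obtain ⟨k, hk⟩ := exists_int_dotProduct_eq_of_mem_intLattice hA hu hv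
  refine ⟨k, ?_⟩
  rw [splitForm_narainPoint_narainPoint M hM, dotProduct_comm v, hk]
  ring

theorem narainLattice_eq_dual (hA : IsUnit A.det) (hM : Mᵀ = -M) :
    narainLattice M A = {w | ∀ w' ∈ narainLattice M A, ∃ k : ℤ, splitForm w w' = k} := by
  ext w
  constructor
  · rintro ⟨u, hu, v, hv, rfl⟩ w' ⟨u', hu', v', hv', rfl⟩
    obtain ⟨k, hk⟩ := exists_int_dotProduct_eq_of_mem_intLattice hA hu' hv
    obtain ⟨k', hk'⟩ := exists_int_dotProduct_eq_of_mem_intLattice hA hu hv'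
    refine ⟨k + k', ?_⟩
    rw [splitForm_narainPoint_narainPoint M hM, dotProduct_comm v, hk, hk']
    push_cast
    ring
  · intro hw
    have hb : (narainCoords M w).2 ∈ intLattice (Aᵀ)⁻¹ :=
      mem_intLattice_inv_transpose hA fun u hu => by
        simpa only [splitForm_narainPoint M hM, dotProduct_zero, add_zero]
          using hw _ ⟨u, hu, 0, zero_mem_intLattice _, rfl⟩
    have ha : (narainCoords M w).1 ∈ intLattice A := by
      rw [intLattice_eq_dual_intLattice_inv_transpose hA]
      intro v hv
      simpa only [splitForm_narainPoint M hM, dotProduct_zero, zero_add]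
        using hw _ ⟨0, zero_mem_intLattice _, v, hv, rfl⟩
    exact ⟨_, ha, _, hb, (narainPoint_narainCoords M w).symm⟩

end Narain

theorem stmt10 (c : ℕ) (A M : Matrix (Fin c) (Fin c) ℝ)
    (hA : IsUnit A) (hM : Mᵀ = -M) :
    let Λ : Set (Fin c → ℝ) :=
      {u | ∃ z : Fin c → ℤ, u = A.mulVec (fun i => (z i : ℝ))}
    let Λd : Set (Fin c → ℝ) :=
      {v | ∃ z : Fin c → ℤ, v = (Aᵀ)⁻¹.mulVec (fun i => (z i : ℝ))}
    let L : Set ((Fin c → ℝ) × (Fin c → ℝ)) :=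
      {w | ∃ u ∈ Λ, ∃ v ∈ Λd,
        w = (fun i => (u i + M.mulVec v i + v i) / Real.sqrt 2,
             fun i => (u i + M.mulVec v i - v i) / Real.sqrt 2)}
    let B : ((Fin c → ℝ) × (Fin c → ℝ)) → ((Fin c → ℝ) × (Fin c → ℝ)) → ℝ :=
      fun w w' => (∑ i, w.1 i * w'.1 i) - (∑ i, w.2 i * w'.2 i)
    (∀ w ∈ L, ∃ k : ℤ, B w w = 2 * k) ∧
      L = {w | ∀ w' ∈ L, ∃ k : ℤ, B w w' = k} := by
  have hdet : IsUnit A.det := (isUnit_iff_isUnit_det A).mp hA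
  exact ⟨fun w => narainLattice_even hdet hM, narainLattice_eq_dual hdet hM⟩
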